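/- Let m ≥ 1 and l ≥ 1 be integers, and let A = F₂[x₁, …, x_{2l}]/(x₁^{m+1}, …, x_{2l}^{m+1}) be the quotient of the polynomial ring over the field with two elements by the ideal generated by the (m+1)-st powers of all the variables. Let ε ∈ F₂ be the mod-2 reduction of the binomial coefficient C(2m−1, m−1). Then in A the following identity holds: (∏_{j=1}^{l} (x_{2j−1} + x_{2j})^{2m−1}) · (∏_{j=1}^{l−1} (x_{2j−1} + x_{2j+1})) = ε · Σ_{j=1}^{2l} ( x_j^{m−1} · ∏_{1 ≤ i ≤ 2l, i ≠ j} x_i^m ), where the second product on the left is empty (equal to 1) when l = 1. -/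

import Mathlib

open MvPolynomial

/-- The ideal generated by the `(m+1)`-st powers of all the variables. -/
noncomputable def powIdeal (N m : ℕ) : Ideal (MvPolynomial (Fin N) (ZMod 2)) :=
  Ideal.span (Set.range fun i : Fin N => (X i : MvPolynomial (Fin N) (ZMod 2)) ^ (m + 1))

section Aux
variable {R : Type*} [CommRing R]

lemma aux_pow_add (m : ℕ) (hm : 1 ≤ m) (a b : R)
    (ha : a ^ (m + 1) = 0) (hb : b ^ (m + 1) = 0) :
    (a + b) ^ (2 * m - 1) =
      ((2 * m - 1).choose (m - 1) : R) * (a ^ (m - 1) * b ^ m + a ^ m * b ^ (m - 1)) := by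
  rw [add_pow]
  have hn : 2 * m - 1 + 1 = 2 * m := by omega
  rw [hn]
  have hsub : ({m - 1, m} : Finset ℕ) ⊆ Finset.range (2 * m) := by
    intro k hk
    simp only [Finset.mem_insert, Finset.mem_singleton] at hk
    simp only [Finset.mem_range]
    omega
  rw [← Finset.sum_subset hsub ?van]
  · rw [Finset.sum_insert (by simp; omega), Finset.sum_singleton]
    have h1 : 2 * m - 1 - (m - 1) = m := by omega
    have h2 : 2 * m - 1 - m = m - 1 := by omega
    have h3 : (2 * m - 1).choose m = (2 * m - 1).choose (m - 1) := by
      rw [← Nat.choose_symm (by omega : m ≤ 2 * m - 1), h2]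
    rw [h1, h2, h3]
    ring
  · intro k hk hk'
    simp only [Finset.mem_insert, Finset.mem_singleton, not_or] at hk'
    simp only [Finset.mem_range] at hk
    rcases le_or_gt k (m - 1) with h | h
    · have : b ^ (2 * m - 1 - k) = b ^ (m + 1) * b ^ (2 * m - 1 - k - (m + 1)) := by
        rw [← pow_add]; congr 1; omega
      rw [this, hb]; ring
    · have : a ^ k = a ^ (m + 1) * a ^ (k - (m + 1)) := by
        rw [← pow_add]; congr 1; omega
      rw [this, ha]; ring

lemma aux_prod_mul_self (m : ℕ) (y : ℕ → R) (hy : ∀ i, y i ^ (m + 1) = 0)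
    (s : Finset ℕ) (k : ℕ) (hk : k ∈ s) :
    (∏ i ∈ s, y i ^ m) * y k = 0 := by
  rw [← Finset.mul_prod_erase s _ hk]
  linear_combination (∏ i ∈ s.erase k, y i ^ m) * hy k

lemma aux_eps_sq (h2 : (2 : R) = 0) (c : ℕ) : (c : R) * (c : R) = (c : R) := by
  have hc : (c : R) = ((c % 2 : ℕ) : R) := by
    conv_lhs => rw [← Nat.mod_add_div c 2]
    push_cast
    rw [h2]
    ring
  rw [hc]
  have : c % 2 = 0 ∨ c % 2 = 1 := by omega
  rcases this with h' | h' <;> rw [h'] <;> simp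

lemma aux_per_term (m : ℕ) (hm : 1 ≤ m) (y : ℕ → R) (hy : ∀ i, y i ^ (m + 1) = 0)
    (k j : ℕ) (hj : j < 2 * k + 2) :
    (y j ^ (m - 1) * ∏ i ∈ (Finset.range (2 * k + 2)).erase j, y i ^ m) *
      ((y (2 * k + 2) ^ (m - 1) * y (2 * k + 3) ^ m +
          y (2 * k + 2) ^ m * y (2 * k + 3) ^ (m - 1)) *
        (y (2 * k) + y (2 * k + 2))) =
    (y j ^ (m - 1) * ∏ i ∈ (Finset.range (2 * k + 4)).erase j, y i ^ m) +
      if j = 2 * k then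
        (y (2 * k + 2) ^ (m - 1) * ∏ i ∈ (Finset.range (2 * k + 4)).erase (2 * k + 2), y i ^ m) +
        (y (2 * k + 3) ^ (m - 1) * ∏ i ∈ (Finset.range (2 * k + 4)).erase (2 * k + 3), y i ^ m)
      else 0 := by
  obtain ⟨m', rfl⟩ : ∃ m', m = m' + 1 := ⟨m - 1, by omega⟩
  simp only [Nat.add_sub_cancel]
  have hset1 : (Finset.range (2 * k + 4)).erase j
      = insert (2 * k + 3) (insert (2 * k + 2) ((Finset.range (2 * k + 2)).erase j)) := by
    ext x
    simp only [Finset.mem_erase, Finset.mem_insert, Finset.mem_range]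
    omega
  have hnm1 : (2 * k + 3) ∉ insert (2 * k + 2) ((Finset.range (2 * k + 2)).erase j) := by
    simp only [Finset.mem_insert, Finset.mem_erase, Finset.mem_range]
    omega
  have hnm2 : (2 * k + 2) ∉ (Finset.range (2 * k + 2)).erase j := by
    simp only [Finset.mem_erase, Finset.mem_range]
    omega
  have hbig : ∏ i ∈ (Finset.range (2 * k + 4)).erase j, y i ^ (m' + 1)
      = y (2 * k + 3) ^ (m' + 1) * (y (2 * k + 2) ^ (m' + 1) *
          ∏ i ∈ (Finset.range (2 * k + 2)).erase j, y i ^ (m' + 1)) := by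
    rw [hset1, Finset.prod_insert hnm1, Finset.prod_insert hnm2]
  rcases eq_or_ne j (2 * k) with rfl | hne
  · rw [if_pos rfl]
    have h2k : 2 * k ∈ Finset.range (2 * k + 2) := by simp only [Finset.mem_range]; omega
    have hfull : y (2 * k) ^ (m' + 1) * ∏ i ∈ (Finset.range (2 * k + 2)).erase (2 * k), y i ^ (m' + 1)
        = ∏ i ∈ Finset.range (2 * k + 2), y i ^ (m' + 1) :=
      Finset.mul_prod_erase _ (fun i => y i ^ (m' + 1)) h2k
    have hsetA : (Finset.range (2 * k + 4)).erase (2 * k + 2)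
        = insert (2 * k + 3) (Finset.range (2 * k + 2)) := by
      ext x
      simp only [Finset.mem_erase, Finset.mem_insert, Finset.mem_range]
      omega
    have hA : ∏ i ∈ (Finset.range (2 * k + 4)).erase (2 * k + 2), y i ^ (m' + 1)
        = y (2 * k + 3) ^ (m' + 1) * ∏ i ∈ Finset.range (2 * k + 2), y i ^ (m' + 1) := by
      rw [hsetA, Finset.prod_insert (by simp only [Finset.mem_range]; omega)]
    have hsetB : (Finset.range (2 * k + 4)).erase (2 * k + 3)
        = insert (2 * k + 2) (Finset.range (2 * k + 2)) := by
      ext x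
      simp only [Finset.mem_erase, Finset.mem_insert, Finset.mem_range]
      omega
    have hB : ∏ i ∈ (Finset.range (2 * k + 4)).erase (2 * k + 3), y i ^ (m' + 1)
        = y (2 * k + 2) ^ (m' + 1) * ∏ i ∈ Finset.range (2 * k + 2), y i ^ (m' + 1) := by
      rw [hsetB, Finset.prod_insert (by simp only [Finset.mem_range]; omega)]
    rw [hbig, hA, hB]
    linear_combination (y (2 * k + 2) ^ m' * y (2 * k + 3) ^ (m' + 1)
          + y (2 * k + 2) ^ (m' + 1) * y (2 * k + 3) ^ m') * hfull
      + (y (2 * k) ^ m' * y (2 * k + 3) ^ m'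
          * ∏ i ∈ (Finset.range (2 * k + 2)).erase (2 * k), y i ^ (m' + 1)) * hy (2 * k + 2)
  · rw [if_neg hne]
    have hz : (∏ i ∈ (Finset.range (2 * k + 2)).erase j, y i ^ (m' + 1)) * y (2 * k) = 0 :=
      aux_prod_mul_self (m' + 1) y hy _ _ (by simp only [Finset.mem_erase, Finset.mem_range]; omega)
    rw [hbig]
    linear_combination (y j ^ m' * (y (2 * k + 2) ^ m' * y (2 * k + 3) ^ (m' + 1)
          + y (2 * k + 2) ^ (m' + 1) * y (2 * k + 3) ^ m')) * hz
      + (y j ^ m' * y (2 * k + 3) ^ m'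
          * ∏ i ∈ (Finset.range (2 * k + 2)).erase j, y i ^ (m' + 1)) * hy (2 * k + 2)

lemma aux_key_sum (m : ℕ) (hm : 1 ≤ m) (y : ℕ → R) (hy : ∀ i, y i ^ (m + 1) = 0) (k : ℕ) :
    (∑ j ∈ Finset.range (2 * k + 2),
        y j ^ (m - 1) * ∏ i ∈ (Finset.range (2 * k + 2)).erase j, y i ^ m) *
      ((y (2 * k + 2) ^ (m - 1) * y (2 * k + 3) ^ m +
          y (2 * k + 2) ^ m * y (2 * k + 3) ^ (m - 1)) *
        (y (2 * k) + y (2 * k + 2))) =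
    ∑ j ∈ Finset.range (2 * k + 4),
      y j ^ (m - 1) * ∏ i ∈ (Finset.range (2 * k + 4)).erase j, y i ^ m := by
  rw [Finset.sum_mul]
  rw [Finset.sum_congr rfl (fun j hj =>
    aux_per_term m hm y hy k j (Finset.mem_range.mp hj))]
  rw [Finset.sum_add_distrib, Finset.sum_ite_eq' (Finset.range (2 * k + 2)) (2 * k)]
  rw [if_pos (by simp only [Finset.mem_range]; omega)]
  conv_rhs => rw [show 2 * k + 4 = (2 * k + 2) + 1 + 1 by omega, Finset.sum_range_succ,
    Finset.sum_range_succ]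
  ring_nf

lemma aux_main (m : ℕ) (hm : 1 ≤ m) (h2 : (2 : R) = 0)
    (y : ℕ → R) (hy : ∀ i, y i ^ (m + 1) = 0) :
    ∀ l, 1 ≤ l →
      (∏ j ∈ Finset.range l, (y (2 * j) + y (2 * j + 1)) ^ (2 * m - 1)) *
        ∏ j ∈ Finset.range (l - 1), (y (2 * j) + y (2 * j + 2)) =
      ((2 * m - 1).choose (m - 1) : R) *
        ∑ j ∈ Finset.range (2 * l),
          y j ^ (m - 1) * ∏ i ∈ (Finset.range (2 * l)).erase j, y i ^ m := by
  intro l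
  induction l with
  | zero => omega
  | succ n ih =>
    intro _
    rcases Nat.eq_zero_or_pos n with rfl | hn
    · simp only [Finset.prod_range_one, zero_add, Nat.sub_self, Finset.prod_range_zero,
        mul_one]
      norm_num
      rw [aux_pow_add m hm _ _ (hy 0) (hy 1),
        Finset.sum_range_succ, Finset.sum_range_one,
        show (Finset.range 2).erase 0 = {1} by decide,
        show (Finset.range 2).erase 1 = {0} by decide,
        Finset.prod_singleton, Finset.prod_singleton]
      ring
    · obtain ⟨k, rfl⟩ : ∃ k, n = k + 1 := ⟨n - 1, by omega⟩
      have IH := ih (by omega)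
      rw [show k + 1 - 1 = k by omega, show 2 * (k + 1) = 2 * k + 2 by omega] at IH
      rw [show k + 1 + 1 - 1 = k + 1 by omega, show 2 * (k + 1 + 1) = 2 * k + 4 by omega,
        show k + 1 + 1 = (k + 1) + 1 by omega]
      rw [Finset.prod_range_succ
          (fun j => (y (2 * j) + y (2 * j + 1)) ^ (2 * m - 1)) (k + 1),
        Finset.prod_range_succ (fun j => (y (2 * j) + y (2 * j + 2))) k]

      rw [show 2 * (k + 1) + 1 = 2 * k + 3 by omega, show 2 * (k + 1) = 2 * k + 2 by omega]
      have hb := aux_pow_add m hm (y (2 * k + 2)) (y (2 * k + 3)) (hy _) (hy _)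
      have hkey := aux_key_sum m hm y hy k
      have heps := aux_eps_sq h2 ((2 * m - 1).choose (m - 1))
      set ε : R := ((2 * m - 1).choose (m - 1) : R) with hε
      set S : R := ∑ j ∈ Finset.range (2 * k + 2),
        y j ^ (m - 1) * ∏ i ∈ (Finset.range (2 * k + 2)).erase j, y i ^ m with hS
      set T : R := ∑ j ∈ Finset.range (2 * k + 4),
        y j ^ (m - 1) * ∏ i ∈ (Finset.range (2 * k + 4)).erase j, y i ^ m with hT
      linear_combination ((y (2 * k + 2) + y (2 * k + 3)) ^ (2 * m - 1) *
            (y (2 * k) + y (2 * k + 2))) * IH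
        + ((y (2 * k) + y (2 * k + 2)) * ε * S) * hb
        + (ε * ε) * hkey + T * heps

end Aux

theorem zero_divisor_power_identity (m l : ℕ) (hm : 1 ≤ m) (hl : 1 ≤ l) :
    (Ideal.Quotient.mk (powIdeal (2 * l) m))
      ((∏ j : Fin l,
          ((X ⟨2 * (j : ℕ), by have := j.isLt; omega⟩ :
              MvPolynomial (Fin (2 * l)) (ZMod 2)) +
            X ⟨2 * (j : ℕ) + 1, by have := j.isLt; omega⟩) ^ (2 * m - 1)) *
        ∏ j : Fin (l - 1),
          ((X ⟨2 * (j : ℕ), by have := j.isLt; omega⟩ :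
              MvPolynomial (Fin (2 * l)) (ZMod 2)) +
            X ⟨2 * (j : ℕ) + 2, by have := j.isLt; omega⟩)) =
    ((Nat.choose (2 * m - 1) (m - 1) : ZMod 2)) •
      (Ideal.Quotient.mk (powIdeal (2 * l) m))
        (∑ j : Fin (2 * l), X j ^ (m - 1) *
          ∏ i ∈ Finset.univ.erase j, X i ^ m) := by
  classical
  set y : ℕ → MvPolynomial (Fin (2 * l)) (ZMod 2) ⧸ powIdeal (2 * l) m :=
    fun i => if h : i < 2 * l then Ideal.Quotient.mk (powIdeal (2 * l) m) (X ⟨i, h⟩) else 0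
    with hydef
  have hy : ∀ i, y i ^ (m + 1) = 0 := by
    intro i
    by_cases h : i < 2 * l
    · simp only [hydef, dif_pos h]
      rw [← map_pow, Ideal.Quotient.eq_zero_iff_mem]
      exact Ideal.subset_span ⟨⟨i, h⟩, rfl⟩
    · simp only [hydef, dif_neg h]
      exact zero_pow (by omega)
  have h2 : (2 : MvPolynomial (Fin (2 * l)) (ZMod 2) ⧸ powIdeal (2 * l) m) = 0 := by
    calc (2 : MvPolynomial (Fin (2 * l)) (ZMod 2) ⧸ powIdeal (2 * l) m)
        = algebraMap (ZMod 2) _ 2 := (map_ofNat _ 2).symm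
      _ = 0 := by rw [show (2 : ZMod 2) = 0 from rfl, map_zero]
  have key := aux_main m hm h2 y hy l hl
  have hX : ∀ (i : ℕ) (h : i < 2 * l),
      Ideal.Quotient.mk (powIdeal (2 * l) m) (X ⟨i, h⟩) = y i := by
    intro i h; simp only [hydef, dif_pos h]
  have hX2 : ∀ j : Fin (2 * l), Ideal.Quotient.mk (powIdeal (2 * l) m) (X j) = y (j : ℕ) :=
    fun j => hX (j : ℕ) j.isLt
  have herase : ∀ j : Fin (2 * l), (∏ i ∈ Finset.univ.erase j, y (i : ℕ) ^ m)
      = ∏ i ∈ (Finset.range (2 * l)).erase (j : ℕ), y i ^ m := by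
    intro j
    have hmap : (Finset.range (2 * l)).erase (j : ℕ)
        = (Finset.univ.erase j).map Fin.valEmbedding := by
      ext x
      simp only [Finset.mem_map, Finset.mem_erase, Finset.mem_range, Finset.mem_univ, true_and,
        Fin.valEmbedding_apply]
      constructor
      · rintro ⟨hne, hx⟩
        exact ⟨⟨x, hx⟩, by simpa [Fin.ext_iff] using hne, rfl⟩
      · rintro ⟨a, ha, rfl⟩
        exact ⟨by simpa [Fin.ext_iff] using ha, a.isLt⟩
    rw [hmap, Finset.prod_map]
    rfl
  rw [map_mul, map_prod, map_prod, map_sum]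
  simp only [map_add, map_pow, map_mul, map_prod, hX, hX2]
  simp only [herase]
  rw [Fin.prod_univ_eq_prod_range
      (fun j => (y (2 * j) + y (2 * j + 1)) ^ (2 * m - 1)) l,
    Fin.prod_univ_eq_prod_range (fun j => (y (2 * j) + y (2 * j + 2))) (l - 1),
    Fin.sum_univ_eq_sum_range
      (fun j => y j ^ (m - 1) * ∏ i ∈ (Finset.range (2 * l)).erase j, y i ^ m) (2 * l)]
  rw [key]
  set S := ∑ j ∈ Finset.range (2 * l), y j ^ (m - 1) * ∏ i ∈ (Finset.range (2 * l)).erase j, y i ^ m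
  set c := (2 * m - 1).choose (m - 1) with hc
  have hcQ : ((c : ℕ) : MvPolynomial (Fin (2 * l)) (ZMod 2) ⧸ powIdeal (2 * l) m)
      = ((c % 2 : ℕ) : MvPolynomial (Fin (2 * l)) (ZMod 2) ⧸ powIdeal (2 * l) m) := by
    conv_lhs => rw [← Nat.mod_add_div c 2]
    push_cast
    rw [h2]
    ring
  have hc2 : ((c : ℕ) : ZMod 2) = ((c % 2 : ℕ) : ZMod 2) := (ZMod.natCast_mod c 2).symm
  rw [hcQ, hc2]
  have : c % 2 = 0 ∨ c % 2 = 1 := by omega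
  rcases this with h | h <;> rw [h] <;> simp
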